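/- Let 0 < α < 1 and let f : ℝ → ℝ be continuously differentiable on [a,b]. Then for every t ∈ [a,b], the Atangana–Baleanu fractional integral of the Atangana–Baleanu fractional derivative of f recovers f up to the initial value: I_*^α(D_*^α f)(t) = f(t) − f(a). -/

import Mathlib

/-!
Expanding `E_{α,1}` term by term and integrating each term with the Beta integral shows that
`K(r) = E_{α,1}(-α r^α / (1 - α))` satisfies
`∫₀ˣ (x - s)^(α-1) K(s) ds = Γ(α) (1 - α) / α · (1 - K(x))`; termwise integration is
legitimate because Gautschi's inequality makes the coefficients `1 / Γ(αk + β)` decay faster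
than any geometric sequence. Exchanging the order of integration over the triangle
`a < u < s < t`, the Riemann–Liouville part of `I_*^α (D_*^α f)(t)` becomes
`∫ₐᵗ f'(u) (1 - K(t - u)) du`, while the other part is `∫ₐᵗ f'(u) K(t - u) du`; together they
give `∫ₐᵗ f' = f(t) - f(a)`.
-/

open Set

/-- Two-parameter Mittag-Leffler function `E_{α,β}(z) = ∑ₖ zᵏ / Γ(αk + β)`. -/
noncomputable def mittagLeffler (α β z : ℝ) : ℝ :=
  ∑' k : ℕ, z ^ k / Real.Gamma (α * k + β)

/-- Atangana–Baleanu fractional derivative of order `α` with base point `a`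
(normalization `M(α) = 1`). -/
noncomputable def abDeriv (α a : ℝ) (f : ℝ → ℝ) (t : ℝ) : ℝ :=
  (1 / (1 - α)) * ∫ s in a..t, deriv f s *
    mittagLeffler α 1 (-α * (t - s) ^ α / (1 - α))

/-- Riemann–Liouville fractional integral of order `α` with base point `a`. -/
noncomputable def rlInt (α a : ℝ) (f : ℝ → ℝ) (t : ℝ) : ℝ :=
  (1 / Real.Gamma α) * ∫ s in a..t, (t - s) ^ (α - 1) * f s

/-- Atangana–Baleanu fractional integral of order `α` with base point `a`
(normalization `M(α) = 1`). -/
noncomputable def abInt (α a : ℝ) (f : ℝ → ℝ) (t : ℝ) : ℝ :=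
  (1 - α) * f t + α * rlInt α a f t

open Filter Topology MeasureTheory

-- Gautschi's inequality.
theorem Real.Gamma_add_one_le_Gamma_add_mul_rpow {α y : ℝ} (hα0 : 0 < α) (hα1 : α < 1)
    (hy : 0 < y) : Real.Gamma (y + 1) ≤ Real.Gamma (y + α) * (y + α) ^ (1 - α) := by
  have hyα : 0 < y + α := by linarith
  have hΓ : 0 < Real.Gamma (y + α) := Real.Gamma_pos_of_pos hyα
  calc Real.Gamma (y + 1)
      = Real.Gamma (α * (y + α) + (1 - α) * (y + α + 1)) := by ring_nf
    _ ≤ Real.Gamma (y + α) ^ α * Real.Gamma (y + α + 1) ^ (1 - α) :=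
      Real.Gamma_mul_add_mul_le_rpow_Gamma_mul_rpow_Gamma hyα (by linarith) hα0 (by linarith)
        (by ring)
    _ = Real.Gamma (y + α) * (y + α) ^ (1 - α) := by
      rw [Real.Gamma_add_one hyα.ne', Real.mul_rpow hyα.le hΓ.le, mul_left_comm,
        ← Real.rpow_add hΓ, add_sub_cancel, Real.rpow_one, mul_comm]

theorem Real.Gamma_div_Gamma_add_le {α y : ℝ} (hα0 : 0 < α) (hα1 : α < 1) (hy : 1 ≤ y) :
    Real.Gamma y / Real.Gamma (y + α) ≤ 2 * (y + α) ^ (-α) := by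
  have hy0 : 0 < y := by linarith
  have hyα : 0 < y + α := by linarith
  have hΓ : 0 < Real.Gamma (y + α) := Real.Gamma_pos_of_pos hyα
  have hgautschi := Real.Gamma_add_one_le_Gamma_add_mul_rpow hα0 hα1 hy0
  rw [Real.Gamma_add_one hy0.ne', sub_eq_add_neg, Real.rpow_add hyα, Real.rpow_one] at hgautschi
  rw [div_le_iff₀ hΓ, ← mul_le_mul_iff_of_pos_left hy0]
  calc y * Real.Gamma y ≤ Real.Gamma (y + α) * ((y + α) * (y + α) ^ (-α)) := hgautschi
    _ ≤ Real.Gamma (y + α) * (2 * y * (y + α) ^ (-α)) := by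
      gcongr
      linarith
    _ = y * (2 * (y + α) ^ (-α) * Real.Gamma (y + α)) := by ring

section MittagLeffler

variable {α β : ℝ}

noncomputable def mittagLefflerSeries (α β : ℝ) : FormalMultilinearSeries ℝ ℝ ℝ :=
  .ofScalars ℝ fun k : ℕ => (Real.Gamma (α * k + β))⁻¹

theorem mittagLeffler_eq_sum (z : ℝ) :
    mittagLeffler α β z = (mittagLefflerSeries α β).sum z := by
  change _ = FormalMultilinearSeries.ofScalarsSum _ z
  simp [mittagLeffler, FormalMultilinearSeries.ofScalars_sum_eq, div_eq_inv_mul]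

theorem tendsto_Gamma_div_Gamma_mul_succ_add (hα0 : 0 < α) (hα1 : α < 1) (hβ : 1 ≤ β) :
    Tendsto (fun k : ℕ => Real.Gamma (α * k + β) / Real.Gamma (α * (k + 1 : ℕ) + β)) atTop
      (𝓝 0) := by
  have hlim : Tendsto (fun k : ℕ => 2 * (α * k + β + α) ^ (-α)) atTop (𝓝 0) := by
    have : Tendsto (fun k : ℕ => α * k + β + α) atTop atTop :=
      tendsto_atTop_add_const_right _ _ <| tendsto_atTop_add_const_right _ _ <|
        tendsto_natCast_atTop_atTop.const_mul_atTop hα0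
    simpa using ((tendsto_rpow_neg_atTop hα0).comp this).const_mul 2
  refine squeeze_zero (fun k => div_nonneg (Real.Gamma_pos_of_pos (by positivity)).le
    (Real.Gamma_pos_of_pos (by positivity)).le) (fun k => ?_) hlim
  rw [show α * (k + 1 : ℕ) + β = α * k + β + α by push_cast; ring]
  exact Real.Gamma_div_Gamma_add_le hα0 hα1 (le_add_of_nonneg_of_le (by positivity) hβ)

theorem radius_mittagLefflerSeries (hα0 : 0 < α) (hα1 : α < 1) (hβ : 1 ≤ β) :
    (mittagLefflerSeries α β).radius = ⊤ := by
  have hΓ (k : ℕ) : 0 < Real.Gamma (α * k + β) := Real.Gamma_pos_of_pos (by positivity)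
  refine FormalMultilinearSeries.ofScalars_radius_eq_top_of_tendsto _ _
    (Eventually.of_forall fun k => inv_ne_zero (hΓ k).ne') ?_
  convert tendsto_Gamma_div_Gamma_mul_succ_add hα0 hα1 hβ using 2 with k
  rw [norm_inv, norm_inv, Real.norm_of_nonneg (hΓ k).le, Real.norm_of_nonneg (hΓ (k + 1)).le,
    inv_div_inv]

theorem continuous_mittagLeffler (hα0 : 0 < α) (hα1 : α < 1) (hβ : 1 ≤ β) :
    Continuous (mittagLeffler α β) := by
  have hr := radius_mittagLefflerSeries hα0 hα1 hβ
  have h := ((mittagLefflerSeries α β).hasFPowerSeriesOnBall (by simp [hr])).continuousOn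
  rw [hr, Metric.eball_top_eq_univ, continuousOn_univ] at h
  simpa only [funext mittagLeffler_eq_sum] using h

theorem summable_mittagLeffler (hα0 : 0 < α) (hα1 : α < 1) (hβ : 1 ≤ β) (z : ℝ) :
    Summable fun k : ℕ => z ^ k / Real.Gamma (α * k + β) := by
  have h := (mittagLefflerSeries α β).summable_norm_apply (x := z)
    (by simp [radius_mittagLefflerSeries hα0 hα1 hβ])
  refine h.of_norm_bounded fun k => le_of_eq ?_
  simp [mittagLefflerSeries, div_eq_inv_mul, mul_comm]

end MittagLeffler

theorem integral_rpow_mul_sub_rpow {p q x : ℝ} (hp : 0 < p) (hq : 0 < q) (hx : 0 < x) :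
    ∫ s in (0 : ℝ)..x, s ^ (p - 1) * (x - s) ^ (q - 1) =
      Real.Gamma p * Real.Gamma q / Real.Gamma (p + q) * x ^ (p + q - 1) := by
  have hbeta := Complex.betaIntegral_scaled p q hx
  rw [Complex.betaIntegral_eq_Gamma_mul_div _ _ (by simpa) (by simpa)] at hbeta
  apply Complex.ofReal_injective
  rw [← intervalIntegral.integral_ofReal]
  convert hbeta using 1
  · refine intervalIntegral.integral_congr fun s hs => ?_
    rw [uIcc_of_le hx.le] at hs
    push_cast
    rw [Complex.ofReal_cpow hs.1, Complex.ofReal_cpow (sub_nonneg.2 hs.2)]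
    push_cast
    rfl
  · rw [← Complex.ofReal_add, Complex.Gamma_ofReal, Complex.Gamma_ofReal, Complex.Gamma_ofReal,
      ← Complex.ofReal_one, ← Complex.ofReal_sub, ← Complex.ofReal_cpow hx.le]
    push_cast
    ring

theorem intervalIntegrable_sub_rpow {r : ℝ} (hr : -1 < r) (a t : ℝ) :
    IntervalIntegrable (fun s => (t - s) ^ r) volume a t := by
  simpa using (intervalIntegral.intervalIntegrable_rpow' hr (a := t - a) (b := 0)).comp_sub_left t

theorem integral_sub_rpow_mul_mittagLeffler_term {α x : ℝ} (hα0 : 0 < α) (hx : 0 < x) (c : ℝ)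
    (k : ℕ) :
    ∫ s in (0 : ℝ)..x, (x - s) ^ (α - 1) * ((c * s ^ α) ^ k / Real.Gamma (α * k + 1)) =
      Real.Gamma α * x ^ α * ((c * x ^ α) ^ k / Real.Gamma (α * k + (α + 1))) := by
  have hbeta := integral_rpow_mul_sub_rpow (p := α * k + 1) (by positivity) hα0 hx
  rw [add_sub_cancel_right, add_assoc, add_comm 1 α] at hbeta
  have hΓ := (Real.Gamma_pos_of_pos (show 0 < α * k + 1 by positivity)).ne'
  calc _ = ∫ s in (0 : ℝ)..x,
        c ^ k / Real.Gamma (α * k + 1) * (s ^ (α * k) * (x - s) ^ (α - 1)) := by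
        refine intervalIntegral.integral_congr fun s hs => ?_
        rw [uIcc_of_le hx.le] at hs
        rw [Real.rpow_mul_natCast hs.1]
        ring
    _ = _ := by
        rw [intervalIntegral.integral_const_mul, hbeta,
          show α * k + (α + 1) - 1 = α + α * k by ring, Real.rpow_add hx,
          Real.rpow_mul_natCast hx.le, mul_pow]
        field_simp

theorem mul_integral_sub_rpow_mul_mittagLeffler {α x : ℝ} (hα0 : 0 < α) (hα1 : α < 1)
    (hx : 0 < x) (c : ℝ) :
    c * ∫ s in (0 : ℝ)..x, (x - s) ^ (α - 1) * mittagLeffler α 1 (c * s ^ α) =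
      Real.Gamma α * (mittagLeffler α 1 (c * x ^ α) - 1) := by
  set T : ℕ → ℝ → ℝ := fun k s =>
    (x - s) ^ (α - 1) * ((c * s ^ α) ^ k / Real.Gamma (α * k + 1))
  have hT_int (k : ℕ) : IntervalIntegrable (T k) volume 0 x :=
    (intervalIntegrable_sub_rpow (by linarith) 0 x).mul_continuousOn
      (((continuous_const.mul (Real.continuous_rpow_const hα0.le)).pow k).div_const _).continuousOn
  have hT_norm (k : ℕ) : ∫ s in Ioc 0 x, ‖T k s‖ =
      Real.Gamma α * x ^ α * ((|c| * x ^ α) ^ k / Real.Gamma (α * k + (α + 1))) := by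
    rw [← integral_sub_rpow_mul_mittagLeffler_term hα0 hx, intervalIntegral.integral_of_le hx.le]
    refine setIntegral_congr_fun measurableSet_Ioc fun s hs => ?_
    have : 0 < Real.Gamma (α * k + 1) := Real.Gamma_pos_of_pos (by positivity)
    simp only [T, norm_mul, norm_pow, norm_div, Real.norm_eq_abs, abs_of_pos this,
      abs_of_nonneg (Real.rpow_nonneg (sub_nonneg.2 hs.2) _),
      abs_of_nonneg (Real.rpow_nonneg hs.1.le _)]
  have hsum := hasSum_integral_of_summable_integral_norm (μ := volume.restrict (Ioc 0 x))
    (fun k => (hT_int k).1) (by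
      simpa only [hT_norm] using
        (summable_mittagLeffler hα0 hα1 (by linarith) _).mul_left (Real.Gamma α * x ^ α))
  have hI : ∫ s in Ioc 0 x, ∑' k, T k s =
      ∫ s in (0 : ℝ)..x, (x - s) ^ (α - 1) * mittagLeffler α 1 (c * s ^ α) := by
    simp only [T, tsum_mul_left, mittagLeffler, intervalIntegral.integral_of_le hx.le]
  have hterm (k : ℕ) : c * ∫ s in Ioc 0 x, T k s =
      Real.Gamma α * ((c * x ^ α) ^ (k + 1) / Real.Gamma (α * (k + 1 : ℕ) + 1)) := by
    rw [← intervalIntegral.integral_of_le hx.le, integral_sub_rpow_mul_mittagLeffler_term hα0 hx,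
      show α * (k + 1 : ℕ) + 1 = α * k + (α + 1) by push_cast; ring]
    ring
  have hE : HasSum (fun k : ℕ => (c * x ^ α) ^ (k + 1) / Real.Gamma (α * (k + 1 : ℕ) + 1))
      (mittagLeffler α 1 (c * x ^ α) - 1) := by
    have h := (summable_mittagLeffler hα0 hα1 le_rfl (c * x ^ α)).hasSum
    rw [← hasSum_nat_add_iff' 1] at h
    simpa [mittagLeffler] using h
  have h := hsum.mul_left c
  simp only [hterm, hI] at h
  exact h.unique (hE.mul_left _)

def openTriangle (a t : ℝ) : Set (ℝ × ℝ) :=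
  {p | a < p.2 ∧ p.2 < p.1 ∧ p.1 < t}

theorem measurableSet_openTriangle (a t : ℝ) : MeasurableSet (openTriangle a t) :=
  (measurableSet_lt measurable_const measurable_snd).inter
    ((measurableSet_lt measurable_snd measurable_fst).inter
      (measurableSet_lt measurable_fst measurable_const))

theorem integral_integral_swap_triangle {E : Type*} [NormedAddCommGroup E] [NormedSpace ℝ E]
    {F : ℝ → ℝ → E} {a t : ℝ} (hat : a ≤ t)
    (hF : IntegrableOn (Function.uncurry F) (openTriangle a t)) :
    ∫ s in a..t, ∫ u in a..s, F s u = ∫ u in a..t, ∫ s in u..t, F s u := by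
  set T := openTriangle a t
  set H : ℝ → ℝ → E := fun s u => T.indicator (Function.uncurry F) (s, u)
  have hT : MeasurableSet T := measurableSet_openTriangle a t
  have hH : Integrable (Function.uncurry H) (volume.prod volume) := by
    rw [← Measure.volume_eq_prod]
    exact (integrable_indicator_iff hT).2 hF
  have hs (s : ℝ) : ∫ u, H s u = (Ioo a t).indicator (fun s => ∫ u in a..s, F s u) s := by
    by_cases hs : s ∈ Ioo a t
    · rw [indicator_of_mem hs, intervalIntegral.integral_of_le hs.1.le,
        integral_Ioc_eq_integral_Ioo, ← integral_indicator measurableSet_Ioo]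
      congr 1 with u
      simp [H, T, openTriangle, indicator_apply, hs.2]
    · rw [indicator_of_notMem hs]
      refine integral_eq_zero_of_ae (Eventually.of_forall fun u => indicator_of_notMem ?_ _)
      exact fun h => hs ⟨h.1.trans h.2.1, h.2.2⟩
  have hu (u : ℝ) : ∫ s, H s u = (Ioo a t).indicator (fun u => ∫ s in u..t, F s u) u := by
    by_cases hu : u ∈ Ioo a t
    · rw [indicator_of_mem hu, intervalIntegral.integral_of_le hu.2.le,
        integral_Ioc_eq_integral_Ioo, ← integral_indicator measurableSet_Ioo]
      congr 1 with s
      simp [H, T, openTriangle, indicator_apply, hu.1]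
    · rw [indicator_of_notMem hu]
      refine integral_eq_zero_of_ae (Eventually.of_forall fun s => indicator_of_notMem ?_ _)
      exact fun h => hu ⟨h.1, h.2.1.trans h.2.2⟩
  calc ∫ s in a..t, ∫ u in a..s, F s u
      = ∫ s, ∫ u, H s u := by
        simp_rw [hs, integral_indicator measurableSet_Ioo, intervalIntegral.integral_of_le hat,
          integral_Ioc_eq_integral_Ioo]
    _ = ∫ u, ∫ s, H s u := integral_integral_swap hH
    _ = ∫ u in a..t, ∫ s in u..t, F s u := by
        simp_rw [hu, integral_indicator measurableSet_Ioo, intervalIntegral.integral_of_le hat,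
          integral_Ioc_eq_integral_Ioo]

theorem integrableOn_sub_rpow_mul_triangle {α a t : ℝ} (hα0 : 0 < α) {g : ℝ × ℝ → ℝ}
    (hg : ContinuousOn g (Icc a t ×ˢ Icc a t)) :
    IntegrableOn (fun p : ℝ × ℝ => (t - p.1) ^ (α - 1) * g p)
      (openTriangle a t) := by
  set T := openTriangle a t
  have hT : MeasurableSet T := measurableSet_openTriangle a t
  have hTsub : T ⊆ Ioo a t ×ˢ Ioo a t := fun p hp =>
    ⟨⟨hp.1.trans hp.2.1, hp.2.2⟩, ⟨hp.1, hp.2.1.trans hp.2.2⟩⟩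
  have hTsub' : T ⊆ Icc a t ×ˢ Icc a t :=
    hTsub.trans (prod_mono Ioo_subset_Icc_self Ioo_subset_Icc_self)
  obtain ⟨C, hC⟩ := (isCompact_Icc.prod isCompact_Icc).exists_bound_of_continuousOn hg
  have hmaj : IntegrableOn (fun p : ℝ × ℝ => (t - p.1) ^ (α - 1) * C) T := by
    refine IntegrableOn.mono_set ?_ hTsub
    rw [IntegrableOn, Measure.volume_eq_prod, ← Measure.prod_restrict]
    exact ((intervalIntegrable_sub_rpow (by linarith) a t).1.mono_set
      Ioo_subset_Ioc_self).mul_prod (integrableOn_const measure_Ioo_lt_top.ne)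
  have hcont : ContinuousOn (fun p : ℝ × ℝ => (t - p.1) ^ (α - 1) * g p) T :=
    ((continuous_const.sub continuous_fst).continuousOn.rpow_const
      fun p hp => Or.inl (sub_ne_zero.2 hp.2.2.ne')).mul (hg.mono hTsub')
  refine hmaj.mono' (hcont.aestronglyMeasurable hT) (ae_restrict_of_forall_mem hT fun p hp => ?_)
  rw [norm_mul, Real.norm_of_nonneg (Real.rpow_nonneg (sub_nonneg.2 hp.2.2.le) _)]
  exact mul_le_mul_of_nonneg_left (hC p (hTsub' hp))
    (Real.rpow_nonneg (sub_nonneg.2 hp.2.2.le) _)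

noncomputable def abKernel (α r : ℝ) : ℝ :=
  mittagLeffler α 1 (-α * r ^ α / (1 - α))

theorem continuous_abKernel {α : ℝ} (hα0 : 0 < α) (hα1 : α < 1) : Continuous (abKernel α) :=
  (continuous_mittagLeffler hα0 hα1 le_rfl).comp <|
    (continuous_const.mul (Real.continuous_rpow_const hα0.le)).div_const _

theorem integral_sub_rpow_mul_abKernel {α x : ℝ} (hα0 : 0 < α) (hα1 : α < 1) (hx : 0 < x) :
    ∫ s in (0 : ℝ)..x, (x - s) ^ (α - 1) * abKernel α s =
      Real.Gamma α * (1 - α) / α * (1 - abKernel α x) := by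
  have h1α : 1 - α ≠ 0 := by linarith
  have hc : -α / (1 - α) ≠ 0 := div_ne_zero (neg_ne_zero.2 hα0.ne') h1α
  have h := mul_integral_sub_rpow_mul_mittagLeffler hα0 hα1 hx (-α / (1 - α))
  have hK (r : ℝ) : abKernel α r = mittagLeffler α 1 (-α / (1 - α) * r ^ α) := by
    rw [abKernel, mul_div_right_comm]
  simp only [hK]
  apply mul_left_cancel₀ hc
  rw [h]
  field_simp
  ring

theorem integral_sub_rpow_mul_integral_mul_abKernel {α a t : ℝ} (hα0 : 0 < α) (hα1 : α < 1)
    (hat : a ≤ t) {φ : ℝ → ℝ} (hφ : ContinuousOn φ (Icc a t)) :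
    ∫ s in a..t, (t - s) ^ (α - 1) * ∫ u in a..s, φ u * abKernel α (s - u) =
      Real.Gamma α * (1 - α) / α * ∫ u in a..t, φ u * (1 - abKernel α (t - u)) := by
  have hK := continuous_abKernel hα0 hα1
  have hshift {u : ℝ} (hu : u < t) : ∫ s in u..t, (t - s) ^ (α - 1) * abKernel α (s - u) =
      Real.Gamma α * (1 - α) / α * (1 - abKernel α (t - u)) := by
    rw [← integral_sub_rpow_mul_abKernel hα0 hα1 (sub_pos.2 hu), ← sub_self u,
      ← intervalIntegral.integral_comp_sub_right
        (fun w => (t - u - w) ^ (α - 1) * abKernel α w)]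
    simp only [sub_sub_sub_cancel_right]
  have hg : ContinuousOn (fun p : ℝ × ℝ => φ p.2 * abKernel α (p.1 - p.2))
      (Icc a t ×ˢ Icc a t) :=
    (hφ.comp continuousOn_snd fun p hp => hp.2).mul (hK.comp (by fun_prop)).continuousOn
  calc _ = ∫ s in a..t, ∫ u in a..s, (t - s) ^ (α - 1) * (φ u * abKernel α (s - u)) := by
        simp_rw [intervalIntegral.integral_const_mul]
    _ = ∫ u in a..t, ∫ s in u..t, (t - s) ^ (α - 1) * (φ u * abKernel α (s - u)) :=
        integral_integral_swap_triangle hat (integrableOn_sub_rpow_mul_triangle hα0 hg)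
    _ = ∫ u in a..t, Real.Gamma α * (1 - α) / α * (φ u * (1 - abKernel α (t - u))) := by
        simp only [intervalIntegral.integral_of_le hat, integral_Ioc_eq_integral_Ioo]
        refine setIntegral_congr_fun measurableSet_Ioo fun u hu => ?_
        simp only [mul_left_comm _ (φ u), intervalIntegral.integral_const_mul, hshift hu.2]
    _ = _ := intervalIntegral.integral_const_mul _ _

theorem abDeriv_eq_integral_derivWithin {α a s t : ℝ} (hs : s ∈ Icc a t) (f : ℝ → ℝ) :
    abDeriv α a f s =
      1 / (1 - α) * ∫ u in a..s, derivWithin f (Icc a t) u * abKernel α (s - u) := by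
  rw [abDeriv]
  congr 1
  simp only [intervalIntegral.integral_of_le hs.1, integral_Ioc_eq_integral_Ioo]
  refine setIntegral_congr_fun measurableSet_Ioo fun u hu => ?_
  rw [derivWithin_of_mem_nhds (Icc_mem_nhds hu.1 (hu.2.trans_le hs.2)), abKernel]

theorem abInt_abDeriv_of_contDiffOn {α a t : ℝ} (hα0 : 0 < α) (hα1 : α < 1) (hat : a ≤ t)
    {f : ℝ → ℝ} (hf : ContDiffOn ℝ 1 f (Icc a t)) :
    abInt α a (abDeriv α a f) t = f t - f a := by
  rcases hat.eq_or_lt with rfl | hat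
  · simp [abInt, rlInt, abDeriv]
  set φ := derivWithin f (Icc a t)
  have hφ : ContinuousOn φ (Icc a t) := hf.continuousOn_derivWithin (uniqueDiffOn_Icc hat) le_rfl
  have hK := continuous_abKernel hα0 hα1
  have h1α : 1 - α ≠ 0 := by linarith
  have hD : abDeriv α a f t = 1 / (1 - α) * ∫ u in a..t, φ u * abKernel α (t - u) :=
    abDeriv_eq_integral_derivWithin (right_mem_Icc.2 hat.le) f
  have hrl : rlInt α a (abDeriv α a f) t = 1 / Real.Gamma α * (1 / (1 - α) *
      ∫ s in a..t, (t - s) ^ (α - 1) * ∫ u in a..s, φ u * abKernel α (s - u)) := by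
    rw [rlInt]
    congr 1
    rw [← intervalIntegral.integral_const_mul]
    refine intervalIntegral.integral_congr fun s hs => ?_
    rw [uIcc_of_le hat.le] at hs
    rw [abDeriv_eq_integral_derivWithin hs]
    ring
  have hint₁ : IntervalIntegrable (fun u => φ u * abKernel α (t - u)) volume a t :=
    ContinuousOn.intervalIntegrable (by rw [uIcc_of_le hat.le]; fun_prop)
  have hint₂ : IntervalIntegrable (fun u => φ u * (1 - abKernel α (t - u))) volume a t :=
    ContinuousOn.intervalIntegrable (by rw [uIcc_of_le hat.le]; fun_prop)
  calc abInt α a (abDeriv α a f) t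
      = (∫ u in a..t, φ u * abKernel α (t - u)) +
          ∫ u in a..t, φ u * (1 - abKernel α (t - u)) := by
        rw [abInt, hrl, hD, integral_sub_rpow_mul_integral_mul_abKernel hα0 hα1 hat.le hφ]
        field_simp
    _ = ∫ u in a..t, φ u := by
        rw [← intervalIntegral.integral_add hint₁ hint₂]
        simp only [← mul_add, add_sub_cancel, mul_one]
    _ = f t - f a := intervalIntegral.integral_derivWithin_Icc_of_contDiffOn_Icc hf hat.le

theorem abInt_abDeriv_general (α a b : ℝ) (hα0 : 0 < α) (hα1 : α < 1)
    (f : ℝ → ℝ) (hf : ContDiffOn ℝ 1 f (Icc a b)) :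
    ∀ t ∈ Icc a b, abInt α a (abDeriv α a f) t = f t - f a := fun _ ht =>
  abInt_abDeriv_of_contDiffOn hα0 hα1 ht.1 (hf.mono (Icc_subset_Icc_right ht.2))

/-- The AB fractional integral of the AB fractional derivative recovers `f`
up to its initial value. -/
theorem abInt_abDeriv (α a b : ℝ) (hα0 : 0 < α) (hα1 : α < 1) (hab : a < b)
    (f : ℝ → ℝ) (hf : ContDiffOn ℝ 1 f (Icc a b)) :
    ∀ t ∈ Icc a b, abInt α a (abDeriv α a f) t = f t - f a :=
  abInt_abDeriv_general α a b hα0 hα1 f hf
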